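/- Let B be a real 2×2 matrix, A, x ∈ ℝ², σ₁, σ₂ ∈ ℝ, let f(t) = exp(−tB)·x + ∫₀ᵗ exp(−(t−s)B)·A ds, and for y = (y₁,y₂) ∈ ℝ² write D(y) = diag(σ₁²y₁, σ₂²y₂). Define h(t) = exp(−tB)·x·xᵀ·exp(−tBᵀ) + ∫₀ᵗ exp(−(t−s)B)·(f(s)Aᵀ + Af(s)ᵀ + D(f(s)))·exp(−(t−s)Bᵀ) ds. Then h(0) = xxᵀ, h is differentiable, and h′(t) = f(t)Aᵀ + Af(t)ᵀ − B·h(t) − h(t)·Bᵀ + D(f(t)) for all t ≥ 0; equivalently, h satisfies the integral equation h(t) = xxᵀ + ∫₀ᵗ { f(s)Aᵀ + Af(s)ᵀ − (B·h(s) + h(s)·Bᵀ) + D(f(s)) } ds. -/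

import Mathlib

open Matrix intervalIntegral

noncomputable section

/-- `f(t) = exp(-tB)·x + ∫₀ᵗ exp(-(t-s)B)·A ds`, the conditional mean of the
two-type CBI-process with drift `dX_t = (A - BX_t)dt`. -/
def condMean (B : Matrix (Fin 2) (Fin 2) ℝ) (A x : Fin 2 → ℝ) (t : ℝ) : Fin 2 → ℝ :=
  (NormedSpace.exp (-(t • B))).mulVec x
    + ∫ s in (0:ℝ)..t, (NormedSpace.exp (-((t - s) • B))).mulVec A

/-- `D(y) = diag(σ₁²y₁, σ₂²y₂)`. -/
def Dmat (σ₁ σ₂ : ℝ) (y : Fin 2 → ℝ) : Matrix (Fin 2) (Fin 2) ℝ :=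
  Matrix.diagonal ![σ₁ ^ 2 * y 0, σ₂ ^ 2 * y 1]

/-- `h(t) = exp(-tB)xxᵀexp(-tBᵀ)
  + ∫₀ᵗ exp(-(t-s)B)(f(s)Aᵀ + Af(s)ᵀ + D(f(s)))exp(-(t-s)Bᵀ) ds`, the
conditional second moment of the two-type CBI-process (defined entrywise). -/
def condSecond (B : Matrix (Fin 2) (Fin 2) ℝ) (A x : Fin 2 → ℝ) (σ₁ σ₂ : ℝ) (t : ℝ) :
    Matrix (Fin 2) (Fin 2) ℝ :=
  Matrix.of fun i j =>
    (NormedSpace.exp (-(t • B)) * vecMulVec x x * NormedSpace.exp (-(t • Bᵀ))) i j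
      + ∫ s in (0:ℝ)..t,
          (NormedSpace.exp (-((t - s) • B))
            * (vecMulVec (condMean B A x s) A + vecMulVec A (condMean B A x s)
                + Dmat σ₁ σ₂ (condMean B A x s))
            * NormedSpace.exp (-((t - s) • Bᵀ))) i j

/-!
Since `exp (-(t - s) • B) = exp (-t • B) * exp (s • B)`, the Duhamel formula defining `h` factors
as `h t = exp (-t • B) * K t * exp (-t • Bᵀ)` with `K t = x xᵀ + ∫₀ᵗ exp (s • B) G s exp (s • Bᵀ)`,
where `G = f Aᵀ + A fᵀ + D f` is continuous. The product rule and the fundamental theorem of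
calculus give `h' = G - B h - h Bᵀ`, and integrating this back gives the integral equation.
-/

open NormedSpace MeasureTheory

section Duhamel

variable {𝔸 : Type*} [NormedRing 𝔸] [NormedAlgebra ℝ 𝔸]

def sylvesterDuhamel (B C X : 𝔸) (G : ℝ → 𝔸) (t : ℝ) : 𝔸 :=
  exp (-(t • B)) * X * exp (-(t • C))
    + ∫ s in (0 : ℝ)..t, exp (-((t - s) • B)) * G s * exp (-((t - s) • C))

theorem sylvesterDuhamel_zero (B C X : 𝔸) (G : ℝ → 𝔸) : sylvesterDuhamel B C X G 0 = X := by
  simp [sylvesterDuhamel]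

variable [CompleteSpace 𝔸]

theorem intervalIntegral_const_mul_mul {f : ℝ → 𝔸} {a b : ℝ}
    (hf : IntervalIntegrable f volume a b) (c d : 𝔸) :
    ∫ s in a..b, c * f s * d = c * (∫ s in a..b, f s) * d :=
  ((ContinuousLinearMap.mul ℝ 𝔸).flip d ∘L ContinuousLinearMap.mul ℝ 𝔸 c).intervalIntegral_comp_comm
    hf

theorem hasDerivAt_exp_neg_smul (B : 𝔸) (t : ℝ) :
    HasDerivAt (fun u : ℝ => exp (-(u • B))) (exp (-(t • B)) * -B) t := by
  simpa only [smul_neg] using hasDerivAt_exp_smul_const (-B) t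

theorem hasDerivAt_exp_neg_smul' (B : 𝔸) (t : ℝ) :
    HasDerivAt (fun u : ℝ => exp (-(u • B))) (-B * exp (-(t • B))) t := by
  simpa only [smul_neg] using hasDerivAt_exp_smul_const' (-B) t

theorem continuous_exp_neg_smul (B : 𝔸) : Continuous fun u : ℝ => exp (-(u • B)) :=
  continuous_iff_continuousAt.2 fun t => (hasDerivAt_exp_neg_smul B t).continuousAt

theorem exp_neg_sub_smul (B : 𝔸) (t s : ℝ) :
    exp (-((t - s) • B)) = exp (-(t • B)) * exp (s • B) := by
  -- `exp_add_of_commute` is stated for Banach algebras over `ℚ`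
  let +nondep : NormedAlgebra ℚ 𝔸 := .restrictScalars ℚ ℝ 𝔸
  rw [← exp_add_of_commute (((Commute.refl B).smul_left t).smul_right s).neg_left, sub_smul,
    neg_sub, sub_eq_neg_add]

theorem exp_neg_sub_smul' (B : 𝔸) (t s : ℝ) :
    exp (-((t - s) • B)) = exp (s • B) * exp (-(t • B)) := by
  let +nondep : NormedAlgebra ℚ 𝔸 := .restrictScalars ℚ ℝ 𝔸
  rw [← exp_add_of_commute (((Commute.refl B).smul_left s).smul_right t).neg_right, sub_smul,
    neg_sub, sub_eq_add_neg]

theorem exp_neg_smul_mul_exp_smul (B : 𝔸) (t : ℝ) : exp (-(t • B)) * exp (t • B) = 1 := by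
  rw [← exp_neg_sub_smul, sub_self, zero_smul, neg_zero, exp_zero]

theorem exp_smul_mul_exp_neg_smul (B : 𝔸) (t : ℝ) : exp (t • B) * exp (-(t • B)) = 1 := by
  rw [← exp_neg_sub_smul', sub_self, zero_smul, neg_zero, exp_zero]

variable {G : ℝ → 𝔸}

theorem continuous_exp_smul_mul_mul_exp_smul (B C : 𝔸) (hG : Continuous G) :
    Continuous fun s : ℝ => exp (s • B) * G s * exp (s • C) :=
  ((differentiable_exp_smul_const ℝ B).continuous.mul hG).mul
    (differentiable_exp_smul_const ℝ C).continuous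

theorem sylvesterDuhamel_eq_conj (B C X : 𝔸) (hG : Continuous G) (t : ℝ) :
    sylvesterDuhamel B C X G t = exp (-(t • B))
      * (X + ∫ s in (0 : ℝ)..t, exp (s • B) * G s * exp (s • C)) * exp (-(t • C)) := by
  have hfactor (s : ℝ) : exp (-((t - s) • B)) * G s * exp (-((t - s) • C))
      = exp (-(t • B)) * (exp (s • B) * G s * exp (s • C)) * exp (-(t • C)) := by
    simp only [exp_neg_sub_smul B, exp_neg_sub_smul' C, mul_assoc]
  simp only [sylvesterDuhamel, hfactor, intervalIntegral_const_mul_mul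
    ((continuous_exp_smul_mul_mul_exp_smul B C hG).intervalIntegrable _ _), mul_add, add_mul]

theorem hasDerivAt_sylvesterDuhamel (B C X : 𝔸) (hG : Continuous G) (t : ℝ) :
    HasDerivAt (sylvesterDuhamel B C X G)
      (G t - (B * sylvesterDuhamel B C X G t + sylvesterDuhamel B C X G t * C)) t := by
  set K : ℝ → 𝔸 := fun u => X + ∫ s in (0 : ℝ)..u, exp (s • B) * G s * exp (s • C)
  have hK : HasDerivAt K (exp (t • B) * G t * exp (t • C)) t :=
    ((continuous_exp_smul_mul_mul_exp_smul B C hG).integral_hasStrictDerivAt 0 t).hasDerivAt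
      |>.const_add X
  have hprod := ((hasDerivAt_exp_neg_smul' B t).mul hK).mul (hasDerivAt_exp_neg_smul C t)
  have hcancel : exp (-(t • B)) * (exp (t • B) * G t * exp (t • C)) * exp (-(t • C)) = G t := by
    rw [← mul_assoc, ← mul_assoc, exp_neg_smul_mul_exp_smul, one_mul, mul_assoc,
      exp_smul_mul_exp_neg_smul, mul_one]
  rw [show sylvesterDuhamel B C X G = fun u => exp (-(u • B)) * K u * exp (-(u • C)) from
    funext (sylvesterDuhamel_eq_conj B C X hG)]
  refine hprod.congr_deriv ?_
  dsimp only [Pi.mul_apply]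
  rw [add_mul, hcancel]
  noncomm_ring

theorem continuous_sylvesterDuhamel (B C X : 𝔸) (hG : Continuous G) :
    Continuous (sylvesterDuhamel B C X G) :=
  continuous_iff_continuousAt.2 fun t => (hasDerivAt_sylvesterDuhamel B C X hG t).continuousAt

theorem sylvesterDuhamel_eq_add_integral (B C X : 𝔸) (hG : Continuous G) (t : ℝ) :
    sylvesterDuhamel B C X G t = X + ∫ s in (0 : ℝ)..t,
      (G s - (B * sylvesterDuhamel B C X G s + sylvesterDuhamel B C X G s * C)) := by
  have hcont := continuous_sylvesterDuhamel B C X hG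
  rw [integral_eq_sub_of_hasDerivAt (fun s _ => hasDerivAt_sylvesterDuhamel B C X hG s)
      ((hG.sub ((continuous_const.mul hcont).add (hcont.mul continuous_const))).intervalIntegrable
        _ _),
    sylvesterDuhamel_zero, add_sub_cancel]

end Duhamel

section MatrixEntries

open scoped Matrix.Norms.Operator

theorem HasDerivAt.matrix_apply {m n : Type*} [Fintype m] [Fintype n] {F : ℝ → Matrix m n ℝ}
    {F' : Matrix m n ℝ} {t : ℝ} (hF : HasDerivAt F F' t) (i : m) (j : n) :
    HasDerivAt (fun u => F u i j) (F' i j) t :=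
  (LinearMap.toContinuousLinearMap (entryLinearMap ℝ ℝ i j)).hasFDerivAt.comp_hasDerivAt t hF

theorem Matrix.intervalIntegral_apply {m n : Type*} [Fintype m] [Fintype n]
    {F : ℝ → Matrix m n ℝ} (hF : Continuous F) (a b : ℝ) (i : m) (j : n) :
    (∫ s in a..b, F s) i j = ∫ s in a..b, F s i j :=
  ((LinearMap.toContinuousLinearMap (entryLinearMap ℝ ℝ i j)).intervalIntegral_comp_comm
    (hF.intervalIntegrable a b)).symm

variable (B : Matrix (Fin 2) (Fin 2) ℝ) (A x : Fin 2 → ℝ) (σ₁ σ₂ : ℝ)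

theorem condMean_eq_add_primitive (t : ℝ) :
    condMean B A x t = exp (-(t • B)) *ᵥ x + ∫ s in (0 : ℝ)..t, exp (-(s • B)) *ᵥ A := by
  rw [condMean, intervalIntegral.integral_comp_sub_left (fun s => exp (-(s • B)) *ᵥ A) t,
    sub_self, sub_zero]

theorem continuous_condMean : Continuous (condMean B A x) := by
  have hexp : Continuous fun u : ℝ => exp (-(u • B)) := continuous_exp_neg_smul B
  simp only [funext (condMean_eq_add_primitive B A x)]
  exact (hexp.matrix_mulVec continuous_const).add
    (continuous_primitive (fun a b => (hexp.matrix_mulVec continuous_const).intervalIntegrable a b) 0)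

theorem continuous_Dmat : Continuous (Dmat σ₁ σ₂) := by
  unfold Dmat
  fun_prop

def condSecondForcing (s : ℝ) : Matrix (Fin 2) (Fin 2) ℝ :=
  vecMulVec (condMean B A x s) A + vecMulVec A (condMean B A x s) + Dmat σ₁ σ₂ (condMean B A x s)

theorem continuous_condSecondForcing : Continuous (condSecondForcing B A x σ₁ σ₂) := by
  have hf := continuous_condMean B A x
  exact ((hf.matrix_vecMulVec continuous_const).add (continuous_const.matrix_vecMulVec hf)).add
    ((continuous_Dmat σ₁ σ₂).comp hf)

theorem condSecond_eq_sylvesterDuhamel :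
    condSecond B A x σ₁ σ₂ = sylvesterDuhamel B Bᵀ (vecMulVec x x) (condSecondForcing B A x σ₁ σ₂) := by
  have hexp (C : Matrix (Fin 2) (Fin 2) ℝ) (t : ℝ) : Continuous fun s : ℝ => exp (-((t - s) • C)) :=
    (continuous_exp_neg_smul C).comp (continuous_const.sub continuous_id)
  funext t
  ext i j
  have hintegrand : Continuous fun s => exp (-((t - s) • B)) * condSecondForcing B A x σ₁ σ₂ s
      * exp (-((t - s) • Bᵀ)) :=
    ((hexp B t).mul (continuous_condSecondForcing B A x σ₁ σ₂)).mul (hexp Bᵀ t)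
  rw [sylvesterDuhamel, Matrix.add_apply]
  exact congrArg (_ + ·) (Matrix.intervalIntegral_apply hintegrand 0 t i j).symm

theorem condSecond_zero : condSecond B A x σ₁ σ₂ 0 = vecMulVec x x := by
  rw [condSecond_eq_sylvesterDuhamel, sylvesterDuhamel_zero]

theorem hasDerivAt_condSecond_apply (t : ℝ) (i j : Fin 2) :
    HasDerivAt (fun u => condSecond B A x σ₁ σ₂ u i j)
      ((condSecondForcing B A x σ₁ σ₂ t
        - (B * condSecond B A x σ₁ σ₂ t + condSecond B A x σ₁ σ₂ t * Bᵀ)) i j) t := by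
  rw [condSecond_eq_sylvesterDuhamel]
  exact (hasDerivAt_sylvesterDuhamel _ _ _ (continuous_condSecondForcing B A x σ₁ σ₂) t).matrix_apply
    i j

theorem condSecond_apply_eq_add_integral (t : ℝ) (i j : Fin 2) :
    condSecond B A x σ₁ σ₂ t i j = vecMulVec x x i j + ∫ s in (0 : ℝ)..t,
      (condSecondForcing B A x σ₁ σ₂ s
        - (B * condSecond B A x σ₁ σ₂ s + condSecond B A x σ₁ σ₂ s * Bᵀ)) i j := by
  have hG := continuous_condSecondForcing B A x σ₁ σ₂
  have hh := continuous_sylvesterDuhamel B Bᵀ (vecMulVec x x) hG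
  set h := sylvesterDuhamel B Bᵀ (vecMulVec x x) (condSecondForcing B A x σ₁ σ₂)
  have hintegrand : Continuous fun s => condSecondForcing B A x σ₁ σ₂ s - (B * h s + h s * Bᵀ) :=
    hG.sub ((continuous_const.mul hh).add (hh.mul continuous_const))
  rw [condSecond_eq_sylvesterDuhamel, sylvesterDuhamel_eq_add_integral _ _ _ hG, Matrix.add_apply]
  exact congrArg (_ + ·) (Matrix.intervalIntegral_apply hintegrand 0 t i j)

end MatrixEntries

theorem condSecondForcing_sub (B : Matrix (Fin 2) (Fin 2) ℝ) (A x : Fin 2 → ℝ) (σ₁ σ₂ s : ℝ)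
    (M : Matrix (Fin 2) (Fin 2) ℝ) :
    condSecondForcing B A x σ₁ σ₂ s - M = vecMulVec (condMean B A x s) A
      + vecMulVec A (condMean B A x s) - M + Dmat σ₁ σ₂ (condMean B A x s) :=
  add_sub_right_comm _ _ _

/-- `h(0) = xxᵀ`, `h` is differentiable with
`h'(t) = f(t)Aᵀ + Af(t)ᵀ − Bh(t) − h(t)Bᵀ + D(f(t))` for `t ≥ 0`; equivalently
`h` satisfies the corresponding integral equation. -/
theorem condSecond_ode (B : Matrix (Fin 2) (Fin 2) ℝ) (A x : Fin 2 → ℝ) (σ₁ σ₂ : ℝ) :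
    condSecond B A x σ₁ σ₂ 0 = vecMulVec x x ∧
    (∀ t : ℝ, 0 ≤ t → ∀ i j : Fin 2,
      HasDerivAt (fun u => condSecond B A x σ₁ σ₂ u i j)
        ((vecMulVec (condMean B A x t) A + vecMulVec A (condMean B A x t)
          - (B * condSecond B A x σ₁ σ₂ t + condSecond B A x σ₁ σ₂ t * Bᵀ)
          + Dmat σ₁ σ₂ (condMean B A x t)) i j) t) ∧
    (∀ t : ℝ, 0 ≤ t → ∀ i j : Fin 2,
      condSecond B A x σ₁ σ₂ t i j
        = vecMulVec x x i j
          + ∫ s in (0:ℝ)..t,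
              (vecMulVec (condMean B A x s) A + vecMulVec A (condMean B A x s)
                - (B * condSecond B A x σ₁ σ₂ s + condSecond B A x σ₁ σ₂ s * Bᵀ)
                + Dmat σ₁ σ₂ (condMean B A x s)) i j) := by
  refine ⟨condSecond_zero B A x σ₁ σ₂, fun t _ i j => ?_, fun t _ i j => ?_⟩
  · simpa only [condSecondForcing_sub] using hasDerivAt_condSecond_apply B A x σ₁ σ₂ t i j
  · simpa only [condSecondForcing_sub] using condSecond_apply_eq_add_integral B A x σ₁ σ₂ t i j

end
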